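/- With notation as in the context, let a > 0 be a real number and η ∈ (0,1). Then for every Laurent series g = Σ_{i ≥ i₀} a_i S^i ∈ O((S)): |Φ(g) − g|_{a,η,log} ≤ η^{a}·|g|_η. In particular, |Φ(g)|_{a,η,log} = |g|_η for all g ∈ O((S)). -/

import Mathlib

open scoped ENNReal Classical

noncomputable section

/-- `b : J → κ` is a `p`-basis of the field `κ` (of characteristic `p`): every element of
`κ` has a unique representation `x = Σ_e a_e^p · ∏_j b_j^{e_j}` over the multi-indices
`e : J →₀ ℕ` with all entries `< p`. -/
def IsPBasis (p : ℕ) {κ : Type} [Field κ] {J : Type} (b : J → κ) : Prop :=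
  ∀ x : κ, ∃! a : {e : J →₀ ℕ // ∀ j, e j < p} →₀ κ,
    x = a.sum fun e c => c ^ p * (e : J →₀ ℕ).prod fun j k => b j ^ k

/-- The generalized binomial coefficient `C(i, t)` for `i ∈ ℤ`, `t ∈ ℕ`:
`i(i−1)⋯(i−t+1)/t!`. -/
def intChoose (i : ℤ) (t : ℕ) : ℤ :=
  (∏ s ∈ Finset.range t, (i - s)) / (t.factorial : ℤ)

/-- The absolute value `|c| = p^{−v(c)}` on `O` (with `|0| = 0`), valued in `ℝ≥0∞`,
associated to a valuation `v` normalized by `v(p) = 1`. -/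
def pNorm {O : Type} [CommRing O] (p : ℕ) (v : O → ℕ) (c : O) : ℝ≥0∞ :=
  if c = 0 then 0 else ((p : ℝ≥0∞)⁻¹) ^ (v c)

/-- The `η`-Gauss norm `|g|_η = sup_i |a_i| η^i` of a Laurent series
`g = Σ_i a_i S^i ∈ O((S))`. -/
def lsGaussNorm {O : Type} [CommRing O] (p : ℕ) (v : O → ℕ) (η : ℝ≥0∞)
    (g : LaurentSeries O) : ℝ≥0∞ :=
  ⨆ i : ℤ, pNorm p v (g.coeff i) * η ^ (i : ℝ)

/-- The logarithmic `(a,η)`-Gauss norm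
`|h|_{a,η,log} = sup_{i,e} |c_{i,e}| η^{i + (a+1)e₀ + a(e₁+⋯+e_m)}` of
`h = Σ c_{i,e} S^i δ₀^{e₀}⋯δ_m^{e_m} ∈ O((S))[[δ₀,…,δ_m]]`. -/
def bigGaussNormLog {O : Type} [CommRing O] (p : ℕ) (v : O → ℕ) {m : ℕ} (a : ℝ)
    (η : ℝ≥0∞) (h : MvPowerSeries (Fin (m + 1)) (LaurentSeries O)) : ℝ≥0∞ :=
  ⨆ i : ℤ, ⨆ e : Fin (m + 1) →₀ ℕ,
    pNorm p v ((MvPowerSeries.coeff (R := LaurentSeries O) e h).coeff i) *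
      η ^ ((i : ℝ) + (a + 1) * (e 0 : ℝ) + a * ∑ j : Fin m, (e j.succ : ℝ))

/-- Coefficients of elements of the ideal generated by the `C c * X j` are divisible
by `c`. -/
private lemma coeff_dvd_of_mem_span {O : Type} [CommRing O] {m : ℕ} (c : O)
    {y : MvPowerSeries (Fin m) O}
    (hy : y ∈ Ideal.span (Set.range fun j : Fin m =>
      MvPowerSeries.C (σ := Fin m) (R := O) c * MvPowerSeries.X j)) :
    ∀ e : Fin m →₀ ℕ, c ∣ MvPowerSeries.coeff (R := O) e y := by
  let I : Ideal (MvPowerSeries (Fin m) O) :=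
    { carrier := {y | ∀ e, c ∣ MvPowerSeries.coeff (R := O) e y}
      add_mem' := fun h1 h2 e => by rw [map_add]; exact dvd_add (h1 e) (h2 e)
      zero_mem' := fun e => by simp
      smul_mem' := fun r y h e => by
        rw [smul_eq_mul, MvPowerSeries.coeff_mul]
        exact Finset.dvd_sum fun x _ => Dvd.dvd.mul_left (h x.2) _ }
  have hle : Ideal.span (Set.range fun j : Fin m =>
      MvPowerSeries.C (σ := Fin m) (R := O) c * MvPowerSeries.X j) ≤ I := by
    rw [Ideal.span_le]
    rintro _ ⟨j, rfl⟩
    intro e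
    rw [MvPowerSeries.coeff_C_mul]
    exact dvd_mul_right c _
  exact hle hy

/-- Elements of the ideal generated by the `C c * X j` have vanishing constant
coefficient. -/
private lemma constantCoeff_zero_of_mem_span {O : Type} [CommRing O] {m : ℕ} (c : O)
    {y : MvPowerSeries (Fin m) O}
    (hy : y ∈ Ideal.span (Set.range fun j : Fin m =>
      MvPowerSeries.C (σ := Fin m) (R := O) c * MvPowerSeries.X j)) :
    MvPowerSeries.coeff (R := O) (0 : Fin m →₀ ℕ) y = 0 := by
  have hle : Ideal.span (Set.range fun j : Fin m =>
      MvPowerSeries.C (σ := Fin m) (R := O) c * MvPowerSeries.X j)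
      ≤ RingHom.ker (MvPowerSeries.constantCoeff (σ := Fin m) (R := O)) := by
    rw [Ideal.span_le]
    rintro _ ⟨j, rfl⟩
    simp [RingHom.mem_ker, MvPowerSeries.constantCoeff_X]
  have h := hle hy
  rw [RingHom.mem_ker] at h
  rw [MvPowerSeries.coeff_zero_eq_constantCoeff]
  exact h

/-- Logarithmic Gauss-norm estimates for the thickening map
`Φ(g) = Σ_i ψ(a_i)(S+δ₀)^i` on `O((S))`, with values in `O((S))[[δ₀, δ₁, …, δ_m]]`
(variable `0` of the `MvPowerSeries` being `δ₀` and variable `j+1` being `δ_j`):  for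
`a > 0` and `η ∈ (0,1)`, one has `|Φ(g) − g|_{a,η,log} ≤ η^{a}·|g|_η` for every
`g ∈ O((S))`, and in particular `|Φ(g)|_{a,η,log} = |g|_η`. -/
theorem thickening_gauss_norm_estimates_log
    {p : ℕ} (hp : p.Prime)
    {κ : Type} [Field κ] [CharP κ p]
    {O : Type} [CommRing O] [IsDomain O] [IsDiscreteValuationRing O] [CharZero O]
    (hmax : IsLocalRing.maximalIdeal O = Ideal.span {(p : O)})
    [IsAdicComplete (IsLocalRing.maximalIdeal O) O]
    (π : O →+* κ) (hπ : Function.Surjective π)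
    (hker : RingHom.ker π = IsLocalRing.maximalIdeal O)
    {m : ℕ} (b : Fin m → κ) (hb : IsPBasis p b)
    (B : Fin m → O) (hB : ∀ j, π (B j) = b j)
    (v : O → ℕ)
    (hv : ∀ c : O, c ≠ 0 →
      c ∈ Ideal.span {(p : O)} ^ (v c) ∧ c ∉ Ideal.span {(p : O)} ^ (v c + 1))
    (ψ : O →+* MvPowerSeries (Fin m) O)
    (hψB : ∀ j, ψ (B j) = MvPowerSeries.C (σ := Fin m) (R := O) (B j) + MvPowerSeries.X j)
    (hψ : ∀ c : O, ψ c - MvPowerSeries.C (σ := Fin m) (R := O) c ∈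
      Ideal.span (Set.range fun j : Fin m =>
        MvPowerSeries.C (σ := Fin m) (R := O) c * MvPowerSeries.X j))
    (Φ : LaurentSeries O → MvPowerSeries (Fin (m + 1)) (LaurentSeries O))
    (hΦ : ∀ (g : LaurentSeries O) (e : Fin (m + 1) →₀ ℕ) (w : ℤ),
      (MvPowerSeries.coeff (R := LaurentSeries O) e (Φ g)).coeff w
        = ((intChoose (w + (e 0 : ℤ)) (e 0) : ℤ) : O) *
          MvPowerSeries.coeff (R := O)
            (Finsupp.equivFunOnFinite.symm fun j : Fin m => e j.succ)
            (ψ (g.coeff (w + (e 0 : ℤ)))))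
    (a : ℝ) (ha : 0 < a) (η : ℝ≥0∞) (hη0 : 0 < η) (hη1 : η < 1) :
    ∀ g : LaurentSeries O,
      bigGaussNormLog p v a η
          (Φ g - MvPowerSeries.C (σ := Fin (m + 1)) (R := LaurentSeries O) g)
        ≤ η ^ a * lsGaussNorm p v η g ∧
      bigGaussNormLog p v a η (Φ g) = lsGaussNorm p v η g := by
  have hηtop : η ≠ ⊤ := (hη1.trans ENNReal.one_lt_top).ne
  have hp1 : (1 : ℝ≥0∞) ≤ (p : ℝ≥0∞) := by
    exact_mod_cast Nat.one_le_cast.mpr hp.one_lt.le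
  -- divisibility implies pNorm inequality
  have hdvd_norm : ∀ {c d : O}, d ∣ c → pNorm p v c ≤ pNorm p v d := by
    intro c d hdc
    rcases eq_or_ne c 0 with rfl | hc
    · simp [pNorm]
    · have hd : d ≠ 0 := by rintro rfl; exact hc (zero_dvd_iff.mp hdc)
      have hvdc : v d ≤ v c := by
        by_contra h
        push_neg at h
        obtain ⟨r, rfl⟩ := hdc
        have hmem : d * r ∈ Ideal.span {(p : O)} ^ (v (d * r) + 1) :=
          Ideal.pow_le_pow_right h
            ((Ideal.span {(p : O)} ^ (v d)).mul_mem_right r (hv d hd).1)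
        exact (hv _ hc).2 hmem
      rw [pNorm, pNorm, if_neg hc, if_neg hd]
      exact pow_le_pow_of_le_one (by positivity) (ENNReal.inv_le_one.mpr hp1) hvdc
  -- coefficients of ψ c are divisible by c
  have hψdvd : ∀ (c : O) (e : Fin m →₀ ℕ), c ∣ MvPowerSeries.coeff (R := O) e (ψ c) := by
    intro c e
    have h1 := coeff_dvd_of_mem_span c (hψ c) e
    have h2 : c ∣ MvPowerSeries.coeff (R := O) e (MvPowerSeries.C (σ := Fin m) (R := O) c) := by
      rw [MvPowerSeries.coeff_C]
      split <;> simp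
    have heq : MvPowerSeries.coeff (R := O) e (ψ c)
        = MvPowerSeries.coeff (R := O) e (ψ c - MvPowerSeries.C (σ := Fin m) (R := O) c)
          + MvPowerSeries.coeff (R := O) e (MvPowerSeries.C (σ := Fin m) (R := O) c) := by
      rw [map_sub]; ring
    rw [heq]
    exact dvd_add h1 h2
  -- constant coefficient of ψ c is c
  have hψ0 : ∀ c : O, MvPowerSeries.coeff (R := O) (0 : Fin m →₀ ℕ) (ψ c) = c := by
    intro c
    have h := constantCoeff_zero_of_mem_span c (hψ c)
    rw [map_sub, sub_eq_zero] at h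
    rw [h, MvPowerSeries.coeff_zero_C]
  have hzerosymm : (Finsupp.equivFunOnFinite.symm fun _ : Fin m => (0 : ℕ))
      = (0 : Fin m →₀ ℕ) := by
    ext j
    simp
  intro g
  -- coefficient of Φ g at the zero multi-index
  have hΦ0 : ∀ w : ℤ,
      (MvPowerSeries.coeff (R := LaurentSeries O) (0 : Fin (m + 1) →₀ ℕ) (Φ g)).coeff w
        = g.coeff w := by
    intro w
    rw [hΦ]
    simp only [Finsupp.coe_zero, Pi.zero_apply, Nat.cast_zero, add_zero]
    rw [hzerosymm, hψ0]
    simp [intChoose]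
  -- the key per-term estimate
  have key : ∀ (i : ℤ) (e : Fin (m + 1) →₀ ℕ),
      pNorm p v ((MvPowerSeries.coeff (R := LaurentSeries O) e (Φ g)).coeff i) *
        η ^ ((i : ℝ) + (a + 1) * (e 0 : ℝ) + a * ∑ j : Fin m, (e j.succ : ℝ))
      ≤ lsGaussNorm p v η g *
        η ^ (a * ((e 0 : ℝ) + ∑ j : Fin m, (e j.succ : ℝ))) := by
    intro i e
    have hdvd : g.coeff (i + (e 0 : ℤ))
        ∣ (MvPowerSeries.coeff (R := LaurentSeries O) e (Φ g)).coeff i := by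
      rw [hΦ]
      exact (hψdvd _ _).mul_left _
    have h1 : pNorm p v ((MvPowerSeries.coeff (R := LaurentSeries O) e (Φ g)).coeff i)
        ≤ pNorm p v (g.coeff (i + (e 0 : ℤ))) := hdvd_norm hdvd
    have hexp : (i : ℝ) + (a + 1) * (e 0 : ℝ) + a * ∑ j : Fin m, (e j.succ : ℝ)
        = ((i + (e 0 : ℤ) : ℤ) : ℝ)
          + a * ((e 0 : ℝ) + ∑ j : Fin m, (e j.succ : ℝ)) := by
      push_cast
      ring
    rw [hexp, ENNReal.rpow_add _ _ hη0.ne' hηtop, ← mul_assoc]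
    refine mul_le_mul' ?_ le_rfl
    refine le_trans (mul_le_mul' h1 le_rfl) ?_
    exact le_iSup (fun i : ℤ => pNorm p v (g.coeff i) * η ^ (i : ℝ)) (i + (e 0 : ℤ))
  have hsum_nonneg : ∀ e : Fin (m + 1) →₀ ℕ,
      (0 : ℝ) ≤ ∑ j : Fin m, (e j.succ : ℝ) :=
    fun e => Finset.sum_nonneg fun _ _ => Nat.cast_nonneg _
  constructor
  · -- first estimate
    rw [bigGaussNormLog]
    refine iSup_le fun i => iSup_le fun e => ?_
    rcases eq_or_ne e 0 with rfl | he
    · have hz : ((MvPowerSeries.coeff (R := LaurentSeries O) (0 : Fin (m + 1) →₀ ℕ)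
          (Φ g - MvPowerSeries.C (σ := Fin (m + 1)) (R := LaurentSeries O) g)).coeff i) = 0 := by
        rw [map_sub, HahnSeries.coeff_sub, hΦ0, MvPowerSeries.coeff_zero_C, sub_self]
      rw [hz]
      simp [pNorm]
    · have hco : MvPowerSeries.coeff (R := LaurentSeries O) e
          (Φ g - MvPowerSeries.C (σ := Fin (m + 1)) (R := LaurentSeries O) g)
          = MvPowerSeries.coeff (R := LaurentSeries O) e (Φ g) := by
        rw [map_sub, MvPowerSeries.coeff_C, if_neg he, sub_zero]
      rw [hco]
      refine (key i e).trans ?_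
      rw [mul_comm]
      refine mul_le_mul' (ENNReal.rpow_le_rpow_of_exponent_ge hη1.le ?_) le_rfl
      have h1 : (1 : ℝ) ≤ (e 0 : ℝ) + ∑ j : Fin m, (e j.succ : ℝ) := by
        obtain ⟨k, hk⟩ := Finsupp.ne_iff.mp he
        simp only [Finsupp.coe_zero, Pi.zero_apply] at hk
        have hs := hsum_nonneg e
        induction k using Fin.cases with
        | zero =>
          have : (1 : ℝ) ≤ (e 0 : ℝ) := by
            exact_mod_cast Nat.one_le_iff_ne_zero.mpr hk
          linarith
        | succ j =>
          have h2 : (e j.succ : ℝ) ≤ ∑ j : Fin m, (e j.succ : ℝ) :=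
            Finset.single_le_sum (f := fun j : Fin m => (e j.succ : ℝ))
              (fun _ _ => Nat.cast_nonneg _) (Finset.mem_univ j)
          have h3 : (1 : ℝ) ≤ (e j.succ : ℝ) := by
            exact_mod_cast Nat.one_le_iff_ne_zero.mpr hk
          have h4 : (0 : ℝ) ≤ (e 0 : ℝ) := Nat.cast_nonneg _
          linarith
      nlinarith
  · -- equality of norms
    refine le_antisymm ?_ ?_
    · rw [bigGaussNormLog]
      refine iSup_le fun i => iSup_le fun e => ?_
      refine (key i e).trans ?_
      have hle1 : η ^ (a * ((e 0 : ℝ) + ∑ j : Fin m, (e j.succ : ℝ))) ≤ 1 :=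
        ENNReal.rpow_le_one hη1.le
          (mul_nonneg ha.le (add_nonneg (Nat.cast_nonneg _) (hsum_nonneg e)))
      calc lsGaussNorm p v η g * η ^ (a * ((e 0 : ℝ) + ∑ j : Fin m, (e j.succ : ℝ)))
          ≤ lsGaussNorm p v η g * 1 := mul_le_mul' le_rfl hle1
        _ = lsGaussNorm p v η g := mul_one _
    · rw [lsGaussNorm]
      refine iSup_le fun i => ?_
      have heq : pNorm p v (g.coeff i) * η ^ (i : ℝ)
          = pNorm p v ((MvPowerSeries.coeff (R := LaurentSeries O)
              (0 : Fin (m + 1) →₀ ℕ) (Φ g)).coeff i) *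
            η ^ ((i : ℝ) + (a + 1) * (((0 : Fin (m + 1) →₀ ℕ) 0 : ℕ) : ℝ)
              + a * ∑ j : Fin m, (((0 : Fin (m + 1) →₀ ℕ) j.succ : ℕ) : ℝ)) := by
        rw [hΦ0]
        simp
      rw [heq, bigGaussNormLog]
      exact le_iSup_of_le i (le_iSup_of_le (0 : Fin (m + 1) →₀ ℕ) le_rfl)

end
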